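/- arXiv:2603.22784 — 3 statements merged into one kernel-verified Lean document; each statement's English description precedes it below -/
import Mathlib

section
/- Fix c ∈ (0,1). Suppose nonnegative functions O and O' on a finite state space Ω satisfy: O(z) = O'(z) = 0; for every x ≠ z, with L = {y : O(y) < O(x) - c} and M = {y : O(x) - c ≤ O(y) < O(x)}, the recursions O(x) = (1 + Σ_{y∈M∪L} P(x,y)O(y)) / P(x, M∪L) and O'(x) = (1 + Σ_{y∈L} P(x,y)O'(y)) / P(x,L) hold with P(x, L) > 0. Then (1 - c)·O'(x) ≤ O(x) for every state x. -/
open scoped Classical in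
/-- Comparison of the optimal algorithm and the auxiliary
(`c`-improving) algorithm: with `L = {y : O(y) < O(x) - c}` and
`M ∪ L = {y : O(y) < O(x)}`, if for every `x ≠ z`
`O(x) = (1 + Σ_{y∈M∪L} P(x,y)O(y)) / P(x,M∪L)` and
`O'(x) = (1 + Σ_{y∈L} P(x,y)O'(y)) / P(x,L)` with `P(x,L) > 0`,
then `(1-c)·O'(x) ≤ O(x)` for all `x`. -/
theorem stmt7 {Ω : Type*} [Fintype Ω] (P : Ω → Ω → ℝ)
    (hP : ∀ x y, 0 ≤ P x y) (hrow : ∀ x, ∑ y, P x y = 1)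
    (z : Ω) (c : ℝ) (hc0 : 0 < c) (hc1 : c < 1)
    (O O' : Ω → ℝ) (hO : ∀ x, 0 ≤ O x) (hO' : ∀ x, 0 ≤ O' x)
    (hz : O z = 0) (hz' : O' z = 0)
    (hrec : ∀ x, x ≠ z →
      0 < (∑ y ∈ Finset.univ.filter (fun y => O y < O x - c), P x y) ∧
      O x = (1 + ∑ y ∈ Finset.univ.filter (fun y => O y < O x), P x y * O y) /
        (∑ y ∈ Finset.univ.filter (fun y => O y < O x), P x y) ∧
      O' x = (1 + ∑ y ∈ Finset.univ.filter (fun y => O y < O x - c), P x y * O' y) /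
        (∑ y ∈ Finset.univ.filter (fun y => O y < O x - c), P x y)) :
    ∀ x, (1 - c) * O' x ≤ O x := by
  classical
  have key : ∀ n : ℕ, ∀ x, (Finset.univ.filter (fun y => O y < O x)).card ≤ n →
      (1 - c) * O' x ≤ O x := by
    intro n
    induction n with
    | zero =>
      intro x hx
      by_cases hxz : x = z
      · subst hxz; simp [hz, hz']
      · exfalso
        obtain ⟨hL, -, -⟩ := hrec x hxz
        have hsub : (Finset.univ.filter (fun y => O y < O x - c)) ⊆
            (Finset.univ.filter (fun y => O y < O x)) := by
          intro y hy
          simp only [Finset.mem_filter] at *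
          exact ⟨hy.1, by linarith [hy.2]⟩
        have hS0 : (Finset.univ.filter (fun y => O y < O x)) = ∅ :=
          Finset.card_eq_zero.mp (Nat.le_zero.mp hx)
        rw [hS0] at hsub
        rw [Finset.subset_empty.mp hsub] at hL
        simp at hL
    | succ n ih =>
      intro x hx
      by_cases hxz : x = z
      · subst hxz; simp [hz, hz']
      obtain ⟨hLpos, hOx, hO'x⟩ := hrec x hxz
      set S := Finset.univ.filter (fun y => O y < O x) with hSdef
      set L := Finset.univ.filter (fun y => O y < O x - c) with hLdef
      have hsub : L ⊆ S := by
        intro y hy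
        simp only [hLdef, hSdef, Finset.mem_filter] at *
        exact ⟨hy.1, by linarith [hy.2]⟩
      have hpS : 0 < ∑ y ∈ S, P x y :=
        lt_of_lt_of_le hLpos
          (Finset.sum_le_sum_of_subset_of_nonneg hsub (fun y _ _ => hP x y))
      -- induction hypothesis for states in L
      have hIH : ∀ y ∈ L, (1 - c) * O' y ≤ O y := by
        intro y hy
        have hyS : y ∈ S := hsub hy
        apply ih
        have h1 : (Finset.univ.filter (fun w => O w < O y)) ⊆ S.erase y := by
          intro w hw
          simp only [hSdef, Finset.mem_filter, Finset.mem_erase] at hw ⊢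
          have hyx : O y < O x := by
            simp only [hSdef, Finset.mem_filter] at hyS; exact hyS.2
          refine ⟨?_, hw.1, by linarith [hw.2]⟩
          intro hwy; rw [hwy] at hw; linarith [hw.2]
        have h2 := Finset.card_le_card h1
        rw [Finset.card_erase_of_mem hyS] at h2
        omega
      -- main estimate
      have hb : (∑ y ∈ S, P x y) * O x = 1 + ∑ y ∈ S, P x y * O y := by
        rw [hOx]; field_simp
      have ha : (∑ y ∈ L, P x y) * O' x = 1 + ∑ y ∈ L, P x y * O' y := by
        rw [hO'x]; field_simp
      have hsplit : ∑ y ∈ S \ L, P x y * O y + ∑ y ∈ L, P x y * O y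
          = ∑ y ∈ S, P x y * O y := Finset.sum_sdiff hsub
      have hsplitP : ∑ y ∈ S \ L, P x y + ∑ y ∈ L, P x y
          = ∑ y ∈ S, P x y := Finset.sum_sdiff hsub
      have hM : (∑ y ∈ S \ L, P x y) * (O x - c) ≤ ∑ y ∈ S \ L, P x y * O y := by
        rw [Finset.sum_mul]
        apply Finset.sum_le_sum
        intro y hy
        have hy' : y ∈ S ∧ y ∉ L := Finset.mem_sdiff.mp hy
        have hge : O x - c ≤ O y := by
          by_contra h
          exact hy'.2 (by simp [hLdef]; linarith)
        exact mul_le_mul_of_nonneg_left hge (hP x y)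
      have hble : ∑ y ∈ S, P x y ≤ 1 := by
        rw [← hrow x]
        exact Finset.sum_le_sum_of_subset_of_nonneg (Finset.subset_univ S)
          (fun y _ _ => hP x y)
      have hmle : ∑ y ∈ S \ L, P x y ≤ 1 := by
        have := Finset.sum_nonneg (fun y (_ : y ∈ L) => hP x y)
        linarith [hsplitP]
      have hmnn : 0 ≤ ∑ y ∈ S \ L, P x y :=
        Finset.sum_nonneg (fun y _ => hP x y)
      have hsumIH : (1 - c) * ∑ y ∈ L, P x y * O' y ≤ ∑ y ∈ L, P x y * O y := by
        rw [Finset.mul_sum]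
        apply Finset.sum_le_sum
        intro y hy
        have := hIH y hy
        have hPnn := hP x y
        nlinarith
      -- combine: (Σ_L P) * O x ≥ (1-c) + Σ_L P*O ≥ (1-c)(1 + Σ_L P*O') = (1-c) O' x * Σ_L P
      have hOxnn := hO x
      have hfinal : (1 - c) * ((∑ y ∈ L, P x y) * O' x) ≤ (∑ y ∈ L, P x y) * O x := by
        rw [ha]
        nlinarith [hb, hsplit, hsplitP, hM, hmle, hmnn]
      nlinarith [hfinal, hLpos]
  intro x
  exact key _ x le_rfl
end

section
/- Let Ω be finite with target z and suppose O : Ω → ℝ≥0∞ satisfies O(z) = 0 and the ordering-based recursion: for each x with finite O-value and x ≠ z, letting L = {y : O(y) < O(x)}, one has P(x, L) > 0 and O(x) = (1 + Σ_{y∈L} P(x,y)O(y))/P(x,L). Then the Dijkstra-like procedure that initializes d_z = 0, d_x = ∞ otherwise, and repeatedly adds the state x* minimizing d over Ω∖T to T while updating d_x ← (1 + Σ_{y∈T} P(x,y)d_y)/P(x,T) for states x with P(x,T) > 0, terminates with d_x = O(x) for all x ∈ Ω. -/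
open scoped Classical

/-- One iteration of the Dijkstra-like procedure: if there is a state `x`
outside `T` with finite `d`-value minimizing `d` over the complement of `T`,
add it to `T` and update `d_w ← (1 + Σ_{t∈T} P(w,t) d_t)/P(w,T)` for all states
`w ∉ T` with `P(w,T) > 0`; otherwise stop (do nothing). -/
noncomputable def dijkstraStep {Ω : Type*} [Fintype Ω] (P : Ω → Ω → ENNReal)
    (st : Finset Ω × (Ω → ENNReal)) : Finset Ω × (Ω → ENNReal) :=
  if h : ∃ x, x ∉ st.1 ∧ st.2 x ≠ ⊤ ∧ ∀ y, y ∉ st.1 → st.2 x ≤ st.2 y then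
    let x := Classical.choose h
    let T' := insert x st.1
    (T', fun w => if w ∉ T' ∧ 0 < ∑ t ∈ T', P w t
        then (1 + ∑ t ∈ T', P w t * st.2 t) / ∑ t ∈ T', P w t
        else st.2 w)
  else st

/-- The full run of the Dijkstra-like procedure: initialize `d_z = 0`,
`d_x = ∞` otherwise, `T = ∅`, and iterate the step `|Ω|` times. -/
noncomputable def dijkstraRun {Ω : Type*} [Fintype Ω]
    (P : Ω → Ω → ENNReal) (z : Ω) : Ω → ENNReal :=
  ((dijkstraStep P)^[Fintype.card Ω]
    (∅, fun x => if x = z then 0 else ⊤)).2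

/-!
After each step the state is `(T, tentativeValue P O T)`, where the settled set `T` contains `z`,
carries finite `O`-values, and lies below its complement in `O`. Splitting `T` along
`L = {y : O y < O x}` and using the recursion for `O x` gives `O x * P(x,T) ≤ 1 + Σ_{t∈T} P(x,t) O(t)`,
so the tentative value never undershoots `O`, with equality once `L ⊆ T ⊆ {y : O y ≤ O x}`.
In particular an `O`-minimizer `m` outside `T` has tentative value `O m`, so the state `x*` the
procedure picks satisfies `O x* ≤ d x* ≤ d m = O m`: it is an `O`-minimizer as well, `d x* = O x*`,
and `T ∪ {x*}` is settled. Every step thus settles a new state until only states with `O = ∞`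
remain outside `T`, and there `d = ∞` too.
-/

open scoped ENNReal
open Finset

theorem ENNReal.sum_le_add_sum_of_sum_eq {ι : Type*} [DecidableEq ι] {g h : ι → ℝ≥0∞}
    {a : ℝ≥0∞} {L : Finset ι} (hL : ∑ i ∈ L, g i = a + ∑ i ∈ L, h i)
    (hg : ∀ i ∈ L, g i ≠ ⊤) (hhg : ∀ i ∈ L, h i ≤ g i) (T : Finset ι)
    (hgh : ∀ i ∈ T \ L, g i ≤ h i) : ∑ i ∈ T, g i ≤ a + ∑ i ∈ T, h i := by
  have hfin : ∑ i ∈ L \ T, g i ≠ ⊤ := sum_ne_top.2 fun i hi => hg i (mem_sdiff.1 hi).1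
  have hinter : ∑ i ∈ T ∩ L, g i ≤ a + ∑ i ∈ T ∩ L, h i := by
    refine (ENNReal.add_le_add_iff_right hfin).1 ?_
    calc ∑ i ∈ T ∩ L, g i + ∑ i ∈ L \ T, g i = ∑ i ∈ L, g i := by
          rw [inter_comm, sum_inter_add_sum_sdiff]
      _ = a + ∑ i ∈ T ∩ L, h i + ∑ i ∈ L \ T, h i := by
          rw [hL, ← sum_inter_add_sum_sdiff L T, inter_comm, add_assoc]
      _ ≤ a + ∑ i ∈ T ∩ L, h i + ∑ i ∈ L \ T, g i := by
          gcongr with i hi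
          exact hhg i (mem_sdiff.1 hi).1
  calc ∑ i ∈ T, g i = ∑ i ∈ T ∩ L, g i + ∑ i ∈ T \ L, g i :=
        (sum_inter_add_sum_sdiff T L g).symm
    _ ≤ a + ∑ i ∈ T ∩ L, h i + ∑ i ∈ T \ L, h i := add_le_add hinter (sum_le_sum hgh)
    _ = a + ∑ i ∈ T, h i := by rw [add_assoc, sum_inter_add_sum_sdiff]

theorem Finset.sum_eq_add_sum_of_subset {ι M : Type*} [DecidableEq ι] [AddCommMonoid M]
    {g h : ι → M} {a : M} {L T : Finset ι} (hL : ∑ i ∈ L, g i = a + ∑ i ∈ L, h i)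
    (hLT : L ⊆ T) (hgh : ∀ i ∈ T \ L, g i = h i) : ∑ i ∈ T, g i = a + ∑ i ∈ T, h i := by
  rw [← sum_sdiff hLT, ← sum_sdiff hLT, hL, sum_congr rfl hgh, add_left_comm]

section Dijkstra

variable {Ω : Type*} {P : Ω → Ω → ℝ≥0∞} {z : Ω} {O : Ω → ℝ≥0∞}

variable (P O) in
noncomputable def tentativeValue (T : Finset Ω) (x : Ω) : ℝ≥0∞ :=
  if x ∈ T then O x
  else if 0 < ∑ t ∈ T, P x t then (1 + ∑ t ∈ T, P x t * O t) / ∑ t ∈ T, P x t else ⊤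

theorem tentativeValue_of_mem {T : Finset Ω} {x : Ω} (hx : x ∈ T) :
    tentativeValue P O T x = O x := if_pos hx

variable (z O) in
structure IsSettled (T : Finset Ω) : Prop where
  target_mem : z ∈ T
  ne_top : ∀ t ∈ T, O t ≠ ⊤
  le_of_notMem : ∀ t ∈ T, ∀ y ∉ T, O t ≤ O y

theorem IsSettled.insert {T : Finset Ω} (hT : IsSettled z O T) {x : Ω} (hfin : O x ≠ ⊤)
    (hmin : ∀ y ∉ T, O x ≤ O y) : IsSettled z O (insert x T) where
  target_mem := mem_insert_of_mem hT.target_mem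
  ne_top t ht := by
    rcases mem_insert.1 ht with rfl | ht
    exacts [hfin, hT.ne_top t ht]
  le_of_notMem t ht y hy := by
    have hyT : y ∉ T := fun h => hy (mem_insert_of_mem h)
    rcases mem_insert.1 ht with rfl | ht
    exacts [hmin y hyT, hT.le_of_notMem t ht y hyT]

theorem isSettled_singleton (hz : O z = 0) : IsSettled z O {z} where
  target_mem := mem_singleton_self z
  ne_top t ht := by simp_all
  le_of_notMem t ht y _ := by simp_all

variable [Fintype Ω]

variable (P z O) in
def SatisfiesRecursion : Prop :=
  ∀ x, x ≠ z → O x ≠ ⊤ →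
    0 < (∑ y ∈ Finset.univ.filter (fun y => O y < O x), P x y) ∧
    O x = (1 + ∑ y ∈ Finset.univ.filter (fun y => O y < O x), P x y * O y) /
      (∑ y ∈ Finset.univ.filter (fun y => O y < O x), P x y)

theorem SatisfiesRecursion.sum_mul_eq (hrec : SatisfiesRecursion P z O)
    (hP : ∀ x y, P x y ≠ ⊤) {x : Ω} (hx : x ≠ z) (hfin : O x ≠ ⊤) :
    ∑ y ∈ univ.filter (fun y => O y < O x), P x y * O x =
      1 + ∑ y ∈ univ.filter (fun y => O y < O x), P x y * O y := by
  obtain ⟨hpos, heq⟩ := hrec x hx hfin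
  set L := univ.filter (fun y => O y < O x)
  rw [← sum_mul, heq]
  exact ENNReal.mul_div_cancel hpos.ne' (ENNReal.sum_ne_top.2 fun y _ => hP x y)

theorem IsSettled.le_tentativeValue (hrec : SatisfiesRecursion P z O) (hP : ∀ x y, P x y ≠ ⊤)
    (hinf : ∀ x, O x = ⊤ → ∀ y, 0 < P x y → O y = ⊤) {T : Finset Ω} (hT : IsSettled z O T)
    (x : Ω) : O x ≤ tentativeValue P O T x := by
  by_cases hxT : x ∈ T
  · exact (tentativeValue_of_mem hxT).ge
  rw [tentativeValue, if_neg hxT]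
  split_ifs with hpos
  · obtain ⟨t, ht, hPt⟩ := exists_ne_zero_of_sum_ne_zero hpos.ne'
    have hfin : O x ≠ ⊤ := fun h => hT.ne_top t ht (hinf x h t (pos_iff_ne_zero.2 hPt))
    have hx : x ≠ z := fun h => hxT (h ▸ hT.target_mem)
    rw [ENNReal.le_div_iff_mul_le (Or.inl hpos.ne') (Or.inl (ENNReal.sum_ne_top.2 fun t _ => hP x t)),
      mul_comm, sum_mul]
    refine ENNReal.sum_le_add_sum_of_sum_eq (hrec.sum_mul_eq hP hx hfin)
      (fun y _ => ENNReal.mul_ne_top (hP x y) hfin) (fun y hy => ?_) T (fun y hy => ?_)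
    · exact mul_le_mul_right (by simpa using hy : O y < O x).le _
    · exact mul_le_mul_right (by simpa using (mem_sdiff.1 hy).2 : O x ≤ O y) _
  · exact le_top

theorem IsSettled.tentativeValue_eq (hrec : SatisfiesRecursion P z O) (hP : ∀ x y, P x y ≠ ⊤)
    {T : Finset Ω} (hT : IsSettled z O T) {x : Ω} (hx : x ∉ T) (hfin : O x ≠ ⊤)
    (hmin : ∀ y ∉ T, O x ≤ O y) : tentativeValue P O T x = O x := by
  have hxz : x ≠ z := fun h => hx (h ▸ hT.target_mem)
  have hLT : univ.filter (fun y => O y < O x) ⊆ T := fun y hy => by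
    by_contra hyT
    exact (hmin y hyT).not_gt (by simpa using hy)
  have hpos : 0 < ∑ t ∈ T, P x t := (hrec x hxz hfin).1.trans_le (sum_le_sum_of_subset hLT)
  have heq : ∑ t ∈ T, P x t * O x = 1 + ∑ t ∈ T, P x t * O t := by
    refine sum_eq_add_sum_of_subset (hrec.sum_mul_eq hP hxz hfin) hLT fun t ht => ?_
    have hxt : O x ≤ O t := not_lt.1 (by simpa using (mem_sdiff.1 ht).2)
    rw [le_antisymm (hT.le_of_notMem t (mem_sdiff.1 ht).1 x hx) hxt]
  rw [tentativeValue, if_neg hx, if_pos hpos, ← heq, ← sum_mul, mul_comm,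
    ENNReal.mul_div_cancel_right hpos.ne' (ENNReal.sum_ne_top.2 fun t _ => hP x t)]

theorem IsSettled.le_of_isMin (hrec : SatisfiesRecursion P z O) (hP : ∀ x y, P x y ≠ ⊤)
    (hinf : ∀ x, O x = ⊤ → ∀ y, 0 < P x y → O y = ⊤) {T : Finset Ω} (hT : IsSettled z O T)
    {x : Ω} (hx : x ∉ T) (hmin : ∀ y ∉ T, tentativeValue P O T x ≤ tentativeValue P O T y) :
    ∀ y ∉ T, O x ≤ O y := by
  obtain ⟨m, hm, hmmin⟩ := exists_min_image Tᶜ O ⟨x, mem_compl.2 hx⟩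
  have hxm : O x ≤ O m := by
    by_cases hmfin : O m = ⊤
    · exact hmfin ▸ le_top
    calc O x ≤ tentativeValue P O T x := hT.le_tentativeValue hrec hP hinf x
      _ ≤ tentativeValue P O T m := hmin m (mem_compl.1 hm)
      _ = O m := hT.tentativeValue_eq hrec hP (mem_compl.1 hm) hmfin
          fun y hy => hmmin y (mem_compl.2 hy)
  exact fun y hy => hxm.trans (hmmin y (mem_compl.2 hy))

theorem IsSettled.exists_isMin (hrec : SatisfiesRecursion P z O) (hP : ∀ x y, P x y ≠ ⊤)
    {T : Finset Ω} (hT : IsSettled z O T) (hex : ∃ x ∉ T, O x ≠ ⊤) :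
    ∃ x, x ∉ T ∧ tentativeValue P O T x ≠ ⊤ ∧
      ∀ y, y ∉ T → tentativeValue P O T x ≤ tentativeValue P O T y := by
  obtain ⟨x₀, hx₀, hfin₀⟩ := hex
  obtain ⟨m, hm, hmmin⟩ := exists_min_image Tᶜ O ⟨x₀, mem_compl.2 hx₀⟩
  have hmfin : O m ≠ ⊤ := ne_top_of_le_ne_top hfin₀ (hmmin x₀ (mem_compl.2 hx₀))
  have hm_eq : tentativeValue P O T m = O m :=
    hT.tentativeValue_eq hrec hP (mem_compl.1 hm) hmfin fun y hy => hmmin y (mem_compl.2 hy)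
  obtain ⟨x, hx, hxmin⟩ := exists_min_image Tᶜ (tentativeValue P O T) ⟨m, hm⟩
  refine ⟨x, mem_compl.1 hx, ?_, fun y hy => hxmin y (mem_compl.2 hy)⟩
  exact ne_top_of_le_ne_top hmfin (hm_eq ▸ hxmin m hm)

theorem dijkstraStep_eq_tentativeValue {T : Finset Ω} {d : Ω → ℝ≥0∞}
    (h : ∃ x, x ∉ T ∧ d x ≠ ⊤ ∧ ∀ y, y ∉ T → d x ≤ d y)
    (hd : ∀ t ∈ insert h.choose T, d t = O t)
    (hzero : ∀ w ∉ insert h.choose T, ∑ t ∈ insert h.choose T, P w t = 0 → d w = ⊤) :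
    dijkstraStep P (T, d) = (insert h.choose T, tentativeValue P O (insert h.choose T)) := by
  rw [dijkstraStep, dif_pos h]
  refine Prod.ext rfl (funext fun w => ?_)
  dsimp only
  by_cases hw : w ∈ insert h.choose T
  · simp only [hw, not_true_eq_false, false_and, if_false, hd w hw, tentativeValue_of_mem hw]
  by_cases hpos : 0 < ∑ t ∈ insert h.choose T, P w t
  · rw [if_pos ⟨hw, hpos⟩, tentativeValue, if_neg hw, if_pos hpos,
      sum_congr rfl fun t ht => by rw [hd t ht]]
  · rw [if_neg fun h => hpos h.2, tentativeValue, if_neg hw, if_neg hpos]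
    exact hzero w hw (nonpos_iff_eq_zero.1 (not_lt.1 hpos))

theorem dijkstraStep_init (hz : O z = 0) :
    dijkstraStep P (∅, fun x => if x = z then 0 else ⊤) = ({z}, tentativeValue P O {z}) := by
  have h : ∃ x, x ∉ (∅ : Finset Ω) ∧ (if x = z then (0 : ℝ≥0∞) else ⊤) ≠ ⊤ ∧
      ∀ y, y ∉ (∅ : Finset Ω) → (if x = z then (0 : ℝ≥0∞) else ⊤) ≤ if y = z then 0 else ⊤ :=
    ⟨z, notMem_empty z, by simp, fun y _ => by simp⟩
  have hchoose : h.choose = z := by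
    by_contra hne
    exact h.choose_spec.2.1 (if_neg hne)
  rw [dijkstraStep_eq_tentativeValue h, hchoose, insert_empty]
  all_goals rw [hchoose, insert_empty]
  · simp [hz]
  · intro w hw _
    rw [if_neg (by simpa using hw)]

theorem exists_dijkstraStep_eq (hrec : SatisfiesRecursion P z O) (hP : ∀ x y, P x y ≠ ⊤)
    (hinf : ∀ x, O x = ⊤ → ∀ y, 0 < P x y → O y = ⊤) {T : Finset Ω} (hT : IsSettled z O T) :
    ∃ T', IsSettled z O T' ∧ T ⊆ T' ∧
      dijkstraStep P (T, tentativeValue P O T) = (T', tentativeValue P O T') ∧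
      ((∀ x ∉ T', O x = ⊤) ∨ T.card < T'.card) := by
  by_cases h : ∃ x, x ∉ T ∧ tentativeValue P O T x ≠ ⊤ ∧
      ∀ y, y ∉ T → tentativeValue P O T x ≤ tentativeValue P O T y
  · obtain ⟨hxT, hxfin, hxmin⟩ := h.choose_spec
    have hmin := hT.le_of_isMin hrec hP hinf hxT hxmin
    have hfin : O h.choose ≠ ⊤ :=
      ne_top_of_le_ne_top hxfin (hT.le_tentativeValue hrec hP hinf _)
    have hval := hT.tentativeValue_eq hrec hP hxT hfin hmin
    refine ⟨insert h.choose T, hT.insert hfin hmin, subset_insert _ _,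
      dijkstraStep_eq_tentativeValue h (fun t ht => ?_) (fun w hw hzero => ?_),
      Or.inr (by rw [card_insert_of_notMem hxT]; omega)⟩
    · rcases mem_insert.1 ht with rfl | ht
      exacts [hval, tentativeValue_of_mem ht]
    · have hwT : w ∉ T := fun h => hw (mem_insert_of_mem h)
      have hzeroT : ∑ t ∈ T, P w t = 0 :=
        le_zero_iff.1 (hzero ▸ sum_le_sum_of_subset (subset_insert _ _))
      rw [tentativeValue, if_neg hwT, hzeroT, if_neg (lt_irrefl 0)]
  · refine ⟨T, hT, subset_rfl, dif_neg h, Or.inl fun x hx => ?_⟩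
    by_contra hfin
    exact h (hT.exists_isMin hrec hP ⟨x, hx, hfin⟩)

theorem exists_iterate_dijkstraStep (hrec : SatisfiesRecursion P z O) (hP : ∀ x y, P x y ≠ ⊤)
    (hinf : ∀ x, O x = ⊤ → ∀ y, 0 < P x y → O y = ⊤) (hz : O z = 0) (k : ℕ) :
    ∃ T, IsSettled z O T ∧
      (dijkstraStep P)^[k + 1] (∅, fun x => if x = z then 0 else ⊤) =
        (T, tentativeValue P O T) ∧
      ((∀ x ∉ T, O x = ⊤) ∨ k + 1 ≤ T.card) := by
  induction k with
  | zero => exact ⟨{z}, isSettled_singleton hz, dijkstraStep_init hz, Or.inr (by simp)⟩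
  | succ k ih =>
    obtain ⟨T, hT, hiter, hprog⟩ := ih
    obtain ⟨T', hT', hTT', hstep, hprog'⟩ := exists_dijkstraStep_eq hrec hP hinf hT
    refine ⟨T', hT', by rw [Function.iterate_succ_apply', hiter, hstep], ?_⟩
    rcases hprog' with hall' | hcard'
    · exact Or.inl hall'
    rcases hprog with hall | hcard
    · exact Or.inl fun x hx => hall x fun hxT => hx (hTT' hxT)
    · exact Or.inr (by omega)

end Dijkstra

/-- The Dijkstra-like procedure terminates with `d_x = O(x)` for
every state `x`, where `O` is the optimal rewinding hitting time of `z`,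
characterized by `O(z) = 0` and, for `x ≠ z` with finite value and
`L = {y : O(y) < O(x)}`, by `P(x,L) > 0` and
`O(x) = (1 + Σ_{y∈L} P(x,y)O(y))/P(x,L)`; states with no positive-probability
path to `z` have `O(x) = ∞`. -/
theorem stmt15 {Ω : Type*} [Fintype Ω]
    (P : Ω → Ω → ENNReal) (hrow : ∀ x, ∑ y, P x y = 1)
    (z : Ω) (O : Ω → ENNReal) (hz : O z = 0)
    (hrec : ∀ x, x ≠ z → O x ≠ ⊤ →
      0 < (∑ y ∈ Finset.univ.filter (fun y => O y < O x), P x y) ∧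
      O x = (1 + ∑ y ∈ Finset.univ.filter (fun y => O y < O x), P x y * O y) /
        (∑ y ∈ Finset.univ.filter (fun y => O y < O x), P x y))
    (hinf : ∀ x, O x = ⊤ → ∀ y, 0 < P x y → O y = ⊤) :
    ∀ x, dijkstraRun P z x = O x := by
  have hP : ∀ x y, P x y ≠ ⊤ := fun x y =>
    ne_top_of_le_ne_top ENNReal.one_ne_top (hrow x ▸ single_le_sum (by simp) (mem_univ y))
  have hcard : Fintype.card Ω - 1 + 1 = Fintype.card Ω :=
    Nat.sub_add_cancel (Fintype.card_pos_iff.2 ⟨z⟩)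
  obtain ⟨T, hT, hrun, hprog⟩ := exists_iterate_dijkstraStep hrec hP hinf hz (Fintype.card Ω - 1)
  have hall : ∀ x ∉ T, O x = ⊤ := by
    rcases hprog with hall | hcardT
    · exact hall
    · rw [eq_univ_of_card T (le_antisymm (card_le_univ T) (hcard ▸ hcardT))]
      exact fun x hx => absurd (mem_univ x) hx
  intro x
  rw [dijkstraRun, ← hcard, hrun]
  by_cases hx : x ∈ T
  · exact tentativeValue_of_mem hx
  · rw [hall x hx]
    exact top_le_iff.1 (hall x hx ▸ hT.le_tentativeValue hrec hP hinf x)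
end

section
/- In the path-with-absorbing-state Markov chain with p = 1/2, any collection of trajectories (without rewinding) that succeeds in reaching x_n with probability at least 1/2 must consist of at least 2^{n-1} trajectories; hence at least 2^{n-1} states are generated, which is exponentially larger than the optimal rewinding hitting time 2n for all n ≥ 6. -/
open scoped ENNReal

lemma aux_pow (n : ℕ) (hn : 6 ≤ n) : 2 * n < 2 ^ (n - 1) := by
  induction n with
  | zero => omega
  | succ m ih =>
    rcases Nat.lt_or_ge m 6 with h | h
    · interval_cases m <;> simp_all <;> omega
    · have := ih (by omega)
      have : m + 1 - 1 = (m - 1) + 1 := by omega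
      rw [this, pow_succ]
      omega

open MeasureTheory in
/-- In the path chain with `p = 1/2`, any collection of `k`
independent trajectories (each reaching `x_n` with probability `2^{-n}`) that
succeeds with probability at least `1/2` must satisfy `k ≥ 2^{n-1}`; and
`2^{n-1} > 2n` (the optimal rewinding hitting time) for all `n ≥ 6`. -/
theorem stmt16 (n k : ℕ) {Ω : Type*} [MeasurableSpace Ω]
    (μ : Measure Ω) [IsProbabilityMeasure μ]
    (A : Fin k → Set Ω)
    (hA : ∀ i, μ (A i) = (1 / 2) ^ n)
    (hsucc : (1 / 2 : ℝ≥0∞) ≤ μ (⋃ i, A i)) :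
    2 ^ (n - 1) ≤ k ∧ (6 ≤ n → 2 * n < 2 ^ (n - 1)) := by
  refine ⟨?_, aux_pow n⟩
  have hle : μ (⋃ i, A i) ≤ ∑ i, μ (A i) := measure_iUnion_fintype_le μ A
  have hsum : ∑ i, μ (A i) = (k : ℝ≥0∞) * (1 / 2) ^ n := by
    simp [hA, Finset.sum_const]
  have h : (1 / 2 : ℝ≥0∞) ≤ (k : ℝ≥0∞) * (1 / 2) ^ n := by
    calc (1 / 2 : ℝ≥0∞) ≤ μ (⋃ i, A i) := hsucc
    _ ≤ ∑ i, μ (A i) := hle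
    _ = _ := hsum
  -- multiply both sides by 2^n
  rcases Nat.eq_zero_or_pos n with h0 | h0
  · subst h0
    simp only [Nat.zero_sub, pow_zero]
    rcases Nat.eq_zero_or_pos k with hk | hk
    · exfalso
      subst hk
      simp at hsucc
    · exact hk
  have h2 : (2 : ℝ≥0∞) ^ (n - 1) ≤ (k : ℝ≥0∞) := by
    have hpow : ((1:ℝ≥0∞) / 2) ^ n = ((2:ℝ≥0∞) ^ n)⁻¹ := by
      rw [one_div, ← ENNReal.inv_pow]
    have hne : ((2:ℝ≥0∞) ^ n) ≠ 0 := by positivity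
    have htop : ((2:ℝ≥0∞) ^ n) ≠ ⊤ := ENNReal.pow_ne_top (by norm_num)
    have hmul := mul_le_mul_left h ((2:ℝ≥0∞) ^ n)
    rw [mul_assoc, hpow, ENNReal.inv_mul_cancel hne htop, mul_one] at hmul
    refine le_trans ?_ hmul
    have h12 : (1 / 2 : ℝ≥0∞) * 2 = 1 := by
      rw [ENNReal.div_mul_cancel (by norm_num) (by norm_num)]
    have hn : n = (n - 1) + 1 := by omega
    rw [hn, pow_succ]
    rw [mul_comm ((2:ℝ≥0∞) ^ (n-1)) 2, ← mul_assoc, h12, one_mul]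
    simp
  have hcast : ((2:ℝ≥0∞) ^ (n-1)) = ((2 ^ (n-1) : ℕ) : ℝ≥0∞) := by push_cast; ring
  rw [hcast] at h2
  exact_mod_cast h2
end
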